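/- arXiv:1307.1826 — 6 statements merged into one kernel-verified Lean document; each statement's English description precedes it below -/
import Mathlib

section
/- Let X be a real Banach space, f : X → ℝ ∪ {+∞} a proper lower semicontinuous function, x̄ ∈ X and x ∈ dom f. Then for every real number λ ≤ f(x̄) − f(x), there exists a point x₀ on the segment [x, x̄) (i.e., x₀ = x + t(x̄ − x) for some t ∈ [0,1)) such that λ ≤ f′(x₀; x̄ − x), where f′ denotes the lower Dini subderivative. -/
open Filter Topology Set

variable {X : Type*} [NormedAddCommGroup X] [NormedSpace ℝ X]

/-- Lower Dini subderivative of `f` at `x` in direction `d`. -/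
noncomputable def diniSub (f : X → EReal) (x d : X) : EReal :=
  Filter.liminf (fun t : ℝ => (f (x + t • d) - f x) / (t : EReal)) (𝓝[>] 0)

/-- Clarke–Rockafellar upper subderivative `f↑(x; d)`. -/
noncomputable def crSub (f : X → EReal) (x d : X) : EReal :=
  ⨆ δ : {δ : ℝ // 0 < δ},
    Filter.limsup
      (fun p : ℝ × X =>
        ⨅ d' : {d' : X // ‖d' - d‖ ≤ δ.1},
          (f (p.2 + p.1 • (d' : X)) - f p.2) / (p.1 : EReal))
      ((𝓝[>] (0:ℝ)) ×ˢ (𝓝 x ⊓ Filter.comap f (𝓝 (f x))))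

/-- Clarke subdifferential. -/
def clarkeSub (f : X → EReal) (x : X) : Set (X →L[ℝ] ℝ) :=
  {xs | ∀ d, ((xs d : ℝ) : EReal) ≤ crSub f x d}

/-- Subdifferential of convex analysis. -/
def cxSub (f : X → EReal) (x : X) : Set (X →L[ℝ] ℝ) :=
  {xs | ∀ y, ((xs (y - x) : ℝ) : EReal) + f x ≤ f y}

/-- Monotone polar of a graph `T ⊆ X × X*`. -/
def MonoPolar (T : Set (X × (X →L[ℝ] ℝ))) : Set (X × (X →L[ℝ] ℝ)) :=
  {p | ∀ q ∈ T, 0 ≤ (q.2 - p.2) (q.1 - p.1)}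

/-- `ε`-enlargement of the Clarke subdifferential. -/
def epsEnl (f : X → EReal) (eps : ℝ) (x : X) : Set (X →L[ℝ] ℝ) :=
  {xs | ∃ xe : X, xs ∈ clarkeSub f xe ∧ ‖xe - x‖ ≤ eps ∧
    f xe - f x ≤ (eps : EReal) ∧ f x - f xe ≤ (eps : EReal) ∧ xs (xe - x) ≤ eps}

/-! Put `g t = f (x + t • (x̄ - x)) - λ t`, a lower semicontinuous function on `[0, 1]` with
`g 0 ≤ g 1`. It attains its minimum on `[0, 1]`, and the inequality `g 0 ≤ g 1` lets us choose the
minimizer `t₀` in `[0, 1)`. Minimality of `g t₀` against `g (t₀ + t)` for small `t > 0` says exactly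
that the difference quotients of `f` at `x + t₀ • (x̄ - x)` are at least `λ`. -/

theorem LowerSemicontinuousOn.exists_isMinOn_Ico_of_le {α β : Type*} [LinearOrder α]
    [TopologicalSpace α] [CompactIccSpace α] [LinearOrder β] {g : α → β} {a b : α}
    (hab : a < b) (hg : LowerSemicontinuousOn g (Icc a b)) (hgab : g a ≤ g b) :
    ∃ t ∈ Ico a b, IsMinOn g (Icc a b) t := by
  obtain ⟨t, ht, hmin⟩ := hg.exists_isMinOn (nonempty_Icc.2 hab.le) isCompact_Icc
  rcases ht.2.lt_or_eq with htb | rfl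
  · exact ⟨t, ⟨ht.1, htb⟩, hmin⟩
  · exact ⟨a, left_mem_Ico.2 hab, fun u hu => hgab.trans (hmin hu)⟩

theorem le_diniSub_of_eventually_le {f : X → EReal} {x d : X} {lam : ℝ}
    (hbot : f x ≠ ⊥) (htop : f x ≠ ⊤)
    (h : ∀ᶠ t : ℝ in 𝓝[>] 0, f x + (lam * t : ℝ) ≤ f (x + t • d)) :
    (lam : EReal) ≤ diniSub f x d := by
  lift f x to ℝ using ⟨htop, hbot⟩ with b hb
  refine le_liminf_of_le (by isBoundedDefault) ?_
  filter_upwards [h, self_mem_nhdsWithin] with t hle (ht : 0 < t)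
  rw [← hb, EReal.le_div_iff_mul_le (by exact_mod_cast ht) (EReal.coe_ne_top t), ← EReal.coe_mul,
    EReal.le_sub_iff_add_le (Or.inl (EReal.coe_ne_bot b)) (Or.inl (EReal.coe_ne_top b)), add_comm]
  exact hle

theorem le_diniSub_of_isMinOn {f : X → EReal} {x d : X} {lam t₀ b : ℝ} (ht₀b : t₀ < b)
    (hmin : IsMinOn (fun t : ℝ => f (x + t • d) - (lam * t : ℝ)) (Icc t₀ b) t₀)
    (hbot : f (x + t₀ • d) ≠ ⊥) (htop : f (x + t₀ • d) ≠ ⊤) :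
    (lam : EReal) ≤ diniSub f (x + t₀ • d) d := by
  refine le_diniSub_of_eventually_le hbot htop ?_
  filter_upwards [Ioo_mem_nhdsGT (sub_pos.2 ht₀b)] with t ht
  have hle : f (x + t₀ • d) - (lam * t₀ : ℝ) ≤ f (x + (t₀ + t) • d) - (lam * (t₀ + t) : ℝ) :=
    hmin ⟨le_add_of_nonneg_right ht.1.le, by linarith [ht.2]⟩
  rw [add_smul, ← add_assoc] at hle
  lift f (x + t₀ • d) to ℝ using ⟨htop, hbot⟩ with c hc
  rw [← EReal.coe_sub, EReal.le_sub_iff_add_le (Or.inl (EReal.coe_ne_bot _))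
    (Or.inl (EReal.coe_ne_top _)), ← EReal.coe_add] at hle
  convert hle using 1
  rw [← EReal.coe_add]
  ring_nf

theorem mean_value_inequality_general
    (f : X → EReal) (hlsc : LowerSemicontinuous f)
    (hbot : ∀ z, f z ≠ ⊥)
    (xb x : X) (hx : f x ≠ ⊤) (lam : ℝ) (hlam : (lam : EReal) ≤ f xb - f x) :
    ∃ t ∈ Set.Ico (0:ℝ) 1,
      (lam : EReal) ≤ diniSub f (x + t • (xb - x)) (xb - x) := by
  set g : ℝ → EReal := fun t => f (x + t • (xb - x)) - (lam * t : ℝ)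
  have hg : LowerSemicontinuous g := by
    exact (hlsc.comp (by fun_prop)).add'
      (continuous_neg.comp (continuous_coe_real_ereal.comp (by fun_prop))).lowerSemicontinuous
      fun t => EReal.continuousAt_add (Or.inr (EReal.coe_ne_bot _)) (Or.inr (EReal.coe_ne_top _))
  lift f x to ℝ using ⟨hx, hbot x⟩ with a ha
  have hg0 : g 0 = a := by simp [g, ha]
  have hg01 : g 0 ≤ g 1 := by
    rw [hg0]
    simpa [g, EReal.le_sub_iff_add_le, add_comm] using hlam
  obtain ⟨t₀, ht₀, hmin⟩ := (hg.lowerSemicontinuousOn _).exists_isMinOn_Ico_of_le one_pos hg01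
  have hg_top : g t₀ ≠ ⊤ := ((hmin ⟨le_rfl, zero_le_one⟩).trans_lt (hg0 ▸ EReal.coe_lt_top a)).ne
  refine ⟨t₀, ht₀, le_diniSub_of_isMinOn ht₀.2 (hmin.on_subset (Icc_subset_Icc_left ht₀.1))
    (hbot _) fun h => hg_top ?_⟩
  simp only [g, h]
  exact EReal.top_sub_coe _

theorem mean_value_inequality [CompleteSpace X]
    (f : X → EReal) (hlsc : LowerSemicontinuous f)
    (hbot : ∀ z, f z ≠ ⊥) (hproper : ∃ z, f z ≠ ⊤)
    (xb x : X) (hx : f x ≠ ⊤) (lam : ℝ) (hlam : (lam : EReal) ≤ f xb - f x) :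
    ∃ t ∈ Set.Ico (0:ℝ) 1,
      (lam : EReal) ≤ diniSub f (x + t • (xb - x)) (xb - x) :=
  mean_value_inequality_general f hlsc hbot xb x hx lam hlam
end

section
/- Let X be a real Banach space, f : X → ℝ ∪ {+∞} proper lower semicontinuous, C ⊆ X convex, and x̄ ∈ C. Then the following are equivalent: (a) f′(y; x̄ − y) ≤ 0 for every y ∈ C; (b) f(y + t(x̄ − y)) ≤ f(y) for every y ∈ C and every t ∈ [0,1]. -/
/-!
Restricted to a segment, the statement is about the lower semicontinuous function
`g s = f (y + s • (xb - y))` on `[0, 1]`, whose lower Dini derivative at each `s` towards `1`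
is `≤ 0` because `y + s • (xb - y)` lies in `C`. Given `ε > 0`, lower semicontinuity makes
`{s ∈ [0, t] | g s ≤ g 0 + ε s}` closed, so it has a largest element; were it `< t`, the Dini
condition there would produce a larger one. Hence `g t ≤ g 0 + ε t` for all `ε > 0`.
-/

open Filter Topology Set

variable {X : Type*} [NormedAddCommGroup X] [NormedSpace ℝ X]

lemma LowerSemicontinuous.isClosed_setOf_le {α γ : Type*} [TopologicalSpace α] [LinearOrder γ]
    [TopologicalSpace γ] [ClosedIciTopology γ] {g φ : α → γ} (hg : LowerSemicontinuous g)
    (hφ : Continuous φ) : IsClosed {s | g s ≤ φ s} :=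
  hg.isClosed_epigraph.preimage (continuous_id.prodMk hφ)

lemma diniSub_nonpos_of_eventually_le {f : X → EReal} {x d : X}
    (h : ∀ᶠ t in 𝓝[>] (0 : ℝ), f (x + t • d) ≤ f x) : diniSub f x d ≤ 0 := by
  refine liminf_le_of_frequently_le' (Eventually.frequently ?_)
  filter_upwards [h, self_mem_nhdsWithin] with t ht ht0
  exact EReal.div_nonpos_of_nonpos_of_nonneg (EReal.sub_nonpos.2 ht)
    (by exact_mod_cast le_of_lt ht0)

lemma frequently_lt_of_diniSub_lt {f : X → EReal} {x d : X} {r c : ℝ} (hx : f x = r)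
    (h : diniSub f x d < c) :
    ∃ᶠ t in 𝓝[>] (0 : ℝ), f (x + t • d) < ((r + c * t : ℝ) : EReal) := by
  refine ((frequently_lt_of_liminf_lt (by isBoundedDefault) h).and_eventually
    self_mem_nhdsWithin).mono fun t ⟨hq, ht⟩ => ?_
  rw [hx, EReal.div_lt_iff (by exact_mod_cast ht) (EReal.coe_ne_top t), ← EReal.coe_mul,
    EReal.sub_lt_iff (Or.inl (EReal.coe_ne_bot r)) (Or.inl (EReal.coe_ne_top r))] at hq
  rwa [add_comm r, EReal.coe_add]

lemma diniSub_comp_add_smul (f : X → EReal) (y d : X) (s c : ℝ) :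
    diniSub (fun s : ℝ => f (y + s • d)) s c = diniSub f (y + s • d) (c • d) := by
  simp only [diniSub, smul_eq_mul, add_smul, mul_smul, add_assoc]

section Segment

variable {g : ℝ → EReal} {a b : ℝ}

lemma le_add_mul_of_diniSub_nonpos (hg : LowerSemicontinuous g) (hbot : ∀ s, g s ≠ ⊥)
    (hdini : ∀ s ∈ Ico a b, diniSub g s (b - s) ≤ 0) {r ε t : ℝ} (ha : g a = r) (hε : 0 < ε)
    (ht : t ∈ Icc a b) : g t ≤ ((r + ε * (t - a) : ℝ) : EReal) := by
  set A := Icc a t ∩ {s | g s ≤ ((r + ε * (s - a) : ℝ) : EReal)}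
  have hA : IsClosed A := isClosed_Icc.inter <|
    hg.isClosed_setOf_le (continuous_coe_real_ereal.comp (by fun_prop))
  have haA : a ∈ A := ⟨⟨le_rfl, ht.1⟩, by simp [ha]⟩
  have hbdd : BddAbove A := bddAbove_Icc.mono inter_subset_left
  set T := sSup A
  have hTA : T ∈ A := hA.csSup_mem ⟨a, haA⟩ hbdd
  rcases hTA.1.2.eq_or_lt with hTt | hTt
  · exact hTt ▸ hTA.2
  exfalso
  have hTb : 0 < b - T := by linarith [ht.2]
  obtain ⟨ρ, hρ⟩ : ∃ ρ : ℝ, g T = ρ :=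
    ⟨(g T).toReal, (EReal.coe_toReal (ne_top_of_le_ne_top (EReal.coe_ne_top _) hTA.2)
      (hbot T)).symm⟩
  have hlt : diniSub g T (b - T) < ((ε * (b - T) : ℝ) : EReal) :=
    (hdini T ⟨hTA.1.1, by linarith⟩).trans_lt (by exact_mod_cast mul_pos hε hTb)
  obtain ⟨τ, hτ, hτ0, hτt⟩ := ((frequently_lt_of_diniSub_lt hρ hlt).and_eventually
    (Ioo_mem_nhdsGT (div_pos (sub_pos.2 hTt) hTb))).exists
  rw [smul_eq_mul] at hτ
  have hstep : 0 < τ * (b - T) := mul_pos hτ0 hTb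
  have hρT : ρ ≤ r + ε * (T - a) := EReal.coe_le_coe_iff.1 (hρ ▸ hTA.2)
  have huA : T + τ * (b - T) ∈ A := by
    refine ⟨⟨by linarith [hTA.1.1], by linarith [(lt_div_iff₀ hTb).1 hτt]⟩, ?_⟩
    refine hτ.le.trans (EReal.coe_le_coe_iff.2 ?_)
    linarith
  linarith [le_csSup hbdd huA]

theorem le_of_diniSub_nonpos (hg : LowerSemicontinuous g) (hbot : ∀ s, g s ≠ ⊥)
    (hdini : ∀ s ∈ Ico a b, diniSub g s (b - s) ≤ 0) {t : ℝ} (ht : t ∈ Icc a b) :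
    g t ≤ g a := by
  by_cases htop : g a = ⊤
  · exact htop ▸ le_top
  set r := (g a).toReal
  have ha : g a = r := (EReal.coe_toReal htop (hbot a)).symm
  rw [ha, ← EReal.le_of_forall_lt_iff_le]
  intro z hz
  have hrz : r < z := EReal.coe_lt_coe_iff.1 hz
  have hta : 0 < t - a + 1 := by linarith [ht.1]
  set ε := (z - r) / (t - a + 1)
  have hε : ε * (t - a + 1) = z - r := div_mul_cancel₀ _ hta.ne'
  have hεpos : 0 < ε := div_pos (sub_pos.2 hrz) hta
  refine (le_add_mul_of_diniSub_nonpos hg hbot hdini ha hεpos ht).trans ?_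
  exact EReal.coe_le_coe_iff.2 (by linarith)

end Segment

theorem minty_dini_iff_increasing_general
    (f : X → EReal) (hlsc : LowerSemicontinuous f)
    (hbot : ∀ z, f z ≠ ⊥)
    (C : Set X) (hC : Convex ℝ C) (xb : X) (hxb : xb ∈ C) :
    (∀ y ∈ C, diniSub f y (xb - y) ≤ 0) ↔
      (∀ y ∈ C, ∀ t ∈ Set.Icc (0:ℝ) 1, f (y + t • (xb - y)) ≤ f y) := by
  refine ⟨fun h y hy t ht => ?_, fun h y hy => ?_⟩
  · have hline : LowerSemicontinuous fun s : ℝ => f (y + s • (xb - y)) :=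
      hlsc.comp (by fun_prop)
    have hdini : ∀ s ∈ Ico (0 : ℝ) 1,
        diniSub (fun s : ℝ => f (y + s • (xb - y))) s (1 - s) ≤ 0 := by
      intro s hs
      rw [diniSub_comp_add_smul]
      convert h _ (hC.add_smul_sub_mem hy hxb ⟨hs.1, hs.2.le⟩) using 2
      module
    simpa using le_of_diniSub_nonpos hline (fun s => hbot _) hdini ht
  · refine diniSub_nonpos_of_eventually_le ?_
    filter_upwards [Ioo_mem_nhdsGT (zero_lt_one' ℝ)] with t ht
    exact h y hy t ⟨ht.1.le, ht.2.le⟩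

theorem minty_dini_iff_increasing [CompleteSpace X]
    (f : X → EReal) (hlsc : LowerSemicontinuous f)
    (hbot : ∀ z, f z ≠ ⊥) (hproper : ∃ z, f z ≠ ⊤)
    (C : Set X) (hC : Convex ℝ C) (xb : X) (hxb : xb ∈ C) :
    (∀ y ∈ C, diniSub f y (xb - y) ≤ 0) ↔
      (∀ y ∈ C, ∀ t ∈ Set.Icc (0:ℝ) 1, f (y + t • (xb - y)) ≤ f y) :=
  minty_dini_iff_increasing_general f hlsc hbot C hC xb hxb
end

section
/- Let X be a real Banach space, f : X → ℝ ∪ {+∞} proper lower semicontinuous, U ⊆ X open convex, x̄ ∈ U, and y ∈ U. If f(y′ + t(x̄ − y′)) ≤ f(y′) for every y′ ∈ U and t ∈ [0,1], then the Clarke–Rockafellar upper subderivative satisfies f↑(y; x̄ − y) ≤ 0. -/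
/-! At a base point `x` near `y` in `U`, the direction `xb - x` is within `‖x - y‖` of
`xb - y` and, by hypothesis, a descent direction for every step in `(0, 1]`; so the
infimum in each difference quotient of `f↑(y; xb - y)` is eventually `≤ 0`. -/

open Filter Topology Set

variable {X : Type*} [NormedAddCommGroup X] [NormedSpace ℝ X]

theorem EReal.sub_div_nonpos {a b : EReal} {t : ℝ} (hab : a ≤ b) (ht : 0 ≤ t) :
    (a - b) / (t : EReal) ≤ 0 :=
  EReal.div_nonpos_of_nonpos_of_nonneg (EReal.sub_nonpos.mpr hab) (EReal.coe_nonneg.mpr ht)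

theorem crSub_nonpos_of_eventually_descent {f : X → EReal} {y d : X}
    (hdesc : ∀ δ > 0, ∀ᶠ p in 𝓝[>] (0 : ℝ) ×ˢ 𝓝 y,
      ∃ d', ‖d' - d‖ ≤ δ ∧ f (p.2 + p.1 • d') ≤ f p.2) :
    crSub f y d ≤ 0 := by
  refine iSup_le fun ⟨δ, hδ⟩ => limsup_le_of_le (by isBoundedDefault) ?_
  have hpos : ∀ᶠ p : ℝ × X in 𝓝[>] (0 : ℝ) ×ˢ 𝓝 y, 0 < p.1 :=
    tendsto_fst.eventually self_mem_nhdsWithin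
  -- Forgetting the constraint `f x → f y` only enlarges the filter.
  refine Filter.Eventually.filter_mono (prod_mono le_rfl inf_le_left) ?_
  filter_upwards [hdesc δ hδ, hpos] with p ⟨d', hd', hle⟩ hp
  exact (iInf_le _ ⟨d', hd'⟩).trans (EReal.sub_div_nonpos hle hp.le)

theorem increasing_imp_crSub_nonpos_general
    (f : X → EReal)
    (U : Set X) (hUo : IsOpen U)
    (xb : X) (y : X) (hy : y ∈ U)
    (h : ∀ y' ∈ U, ∀ t ∈ Set.Icc (0:ℝ) 1, f (y' + t • (xb - y')) ≤ f y') :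
    crSub f y (xb - y) ≤ 0 := by
  refine crSub_nonpos_of_eventually_descent fun δ hδ => ?_
  have hstep : ∀ᶠ t : ℝ in 𝓝[>] 0, t ∈ Icc (0 : ℝ) 1 :=
    mem_of_superset (Ioc_mem_nhdsGT one_pos) Ioc_subset_Icc_self
  have hbase : ∀ᶠ x in 𝓝 y, x ∈ U ∧ x ∈ Metric.closedBall y δ :=
    (hUo.eventually_mem hy).and (Metric.closedBall_mem_nhds y hδ)
  filter_upwards [hstep.prod_mk hbase] with ⟨t, x⟩ ⟨ht, hxU, hxy⟩
  refine ⟨xb - x, ?_, h x hxU t ht⟩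
  rwa [sub_sub_sub_cancel_left, ← dist_eq_norm, dist_comm]

theorem increasing_imp_crSub_nonpos [CompleteSpace X]
    (f : X → EReal) (hlsc : LowerSemicontinuous f)
    (hbot : ∀ z, f z ≠ ⊥) (hproper : ∃ z, f z ≠ ⊤)
    (U : Set X) (hUo : IsOpen U) (hUc : Convex ℝ U)
    (xb : X) (hxb : xb ∈ U) (y : X) (hy : y ∈ U)
    (h : ∀ y' ∈ U, ∀ t ∈ Set.Icc (0:ℝ) 1, f (y' + t • (xb - y')) ≤ f y') :
    crSub f y (xb - y) ≤ 0 :=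
  increasing_imp_crSub_nonpos_general f U hUo xb y hy h
end

section
/- Let X be a real Banach space and f : X → ℝ ∪ {+∞} a proper lower semicontinuous convex function. Then for every x̄ ∈ dom f, the Clarke subdifferential coincides with the convex subdifferential: ∂_C f(x̄) = ∂_cx f(x̄). -/
open Filter Topology Set

variable {X : Type*} [NormedAddCommGroup X] [NormedSpace ℝ X]

/-! A convex subgradient `x*` bounds every difference quotient of `f` at `x̄` from below, up to
`‖x*‖ δ` when the direction is perturbed by at most `δ`; keeping the base point at `x̄` in the
Clarke–Rockafellar limsup already gives `⟨x*, d⟩ ≤ f↑(x̄; d)`. Conversely, convexity bounds the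
quotient `(f (x + t (y - x)) - f x) / t`, `t ∈ (0, 1]`, by the secant slope `f y - f x`; letting
`x → x̄` with `f x → f x̄` gives `f↑(x̄; y - x̄) ≤ f y - f x̄`, the subgradient inequality for a
Clarke subgradient. -/

theorem le_crSub_of_forall_pos {f : X → EReal} {x d : X} {δ : ℝ} (hδ : 0 < δ) {c : EReal}
    (h : ∀ t : ℝ, 0 < t → ∀ d' : X, ‖d' - d‖ ≤ δ → c ≤ (f (x + t • d') - f x) / t) :
    c ≤ crSub f x d := by
  refine le_iSup_of_le ⟨δ, hδ⟩ ?_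
  have hpure : 𝓝[>] (0 : ℝ) ×ˢ pure x ≤ 𝓝[>] (0 : ℝ) ×ˢ (𝓝 x ⊓ comap f (𝓝 (f x))) :=
    prod_mono le_rfl (le_inf (pure_le_nhds x) (map_le_iff_le_comap.mp (pure_le_nhds _)))
  refine le_trans ?_ (limsup_le_limsup_of_le hpure)
  refine le_trans (le_liminf_of_le (by isBoundedDefault) ?_) liminf_le_limsup
  filter_upwards [prod_mem_prod self_mem_nhdsWithin (mem_pure.2 (mem_singleton x))]
    with ⟨t, x'⟩ ⟨ht, rfl⟩
  exact le_iInf fun d' => h t ht d' d'.2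

theorem le_crSub_of_mem_cxSub {f : X → EReal} {x : X} {r : ℝ} (hx : f x = r)
    {xs : X →L[ℝ] ℝ} (hxs : xs ∈ cxSub f x) (d : X) {δ : ℝ} (hδ : 0 < δ) :
    ((xs d - ‖xs‖ * δ : ℝ) : EReal) ≤ crSub f x d := by
  refine le_crSub_of_forall_pos hδ fun t ht d' hd' => ?_
  have hlip : xs d - ‖xs‖ * δ ≤ xs d' := by
    have := (Real.le_norm_self _).trans ((xs.le_opNorm (d - d')).trans
      (mul_le_mul_of_nonneg_left ((norm_sub_rev d d').trans_le hd') (norm_nonneg xs)))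
    rw [map_sub] at this
    linarith
  have hsub : ((t * xs d' + r : ℝ) : EReal) ≤ f (x + t • d') := by
    simpa [hx, map_smul] using hxs (x + t • d')
  rw [hx, EReal.le_div_iff_mul_le (by exact_mod_cast ht) (EReal.coe_ne_top t),
    EReal.le_sub_iff_add_le (.inl (EReal.coe_ne_bot r)) (.inl (EReal.coe_ne_top r))]
  refine le_trans ?_ hsub
  rw [← EReal.coe_mul, ← EReal.coe_add, EReal.coe_le_coe_iff]
  nlinarith

theorem cxSub_subset_clarkeSub {f : X → EReal} {x : X} (htop : f x ≠ ⊤) (hbot : f x ≠ ⊥) :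
    cxSub f x ⊆ clarkeSub f x := by
  intro xs hxs d
  have hlim : Tendsto (fun δ : ℝ => ((xs d - ‖xs‖ * δ : ℝ) : EReal)) (𝓝[>] 0) (𝓝 (xs d)) := by
    refine (continuous_coe_real_ereal.tendsto _).comp (tendsto_nhdsWithin_of_tendsto_nhds ?_)
    exact (by fun_prop : Continuous fun δ : ℝ => xs d - ‖xs‖ * δ).tendsto' 0 (xs d) (by simp)
  exact le_of_tendsto hlim (eventually_nhdsWithin_of_forall fun δ hδ =>
    le_crSub_of_mem_cxSub (EReal.coe_toReal htop hbot).symm hxs d hδ)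

theorem slope_le_of_convex {f : X → EReal}
    (hconv : ∀ x y : X, ∀ a b : ℝ, 0 ≤ a → 0 ≤ b → a + b = 1 →
      f (a • x + b • y) ≤ (a : EReal) * f x + (b : EReal) * f y)
    {x y : X} {r s : ℝ} (hx : f x = r) (hy : f y = s) {t : ℝ} (ht0 : 0 < t) (ht1 : t ≤ 1) :
    (f (x + t • (y - x)) - r) / t ≤ ((s - r : ℝ) : EReal) := by
  have hseg : f (x + t • (y - x)) ≤ ((t * (s - r) + r : ℝ) : EReal) := by
    have := hconv x y (1 - t) t (by linarith) ht0.le (by ring)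
    rw [hx, hy, ← EReal.coe_mul, ← EReal.coe_mul, ← EReal.coe_add] at this
    convert this using 2 <;> first | module | ring
  rw [EReal.div_le_iff_le_mul (by exact_mod_cast ht0) (EReal.coe_ne_top t),
    EReal.sub_le_iff_le_add (.inl (EReal.coe_ne_bot r)) (.inl (EReal.coe_ne_top r))]
  exact hseg.trans_eq (by norm_cast)

theorem crSub_le_of_convex {f : X → EReal}
    (hconv : ∀ x y : X, ∀ a b : ℝ, 0 ≤ a → 0 ≤ b → a + b = 1 →
      f (a • x + b • y) ≤ (a : EReal) * f x + (b : EReal) * f y)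
    {x y : X} {r s : ℝ} (hx : f x = r) (hy : f y = s) :
    crSub f x (y - x) ≤ ((s - r : ℝ) : EReal) := by
  refine iSup_le fun δ => EReal.le_of_forall_lt_iff_le.1 fun z hz => ?_
  set ε := z - (s - r)
  have hε : 0 < ε := sub_pos.2 (EReal.coe_lt_coe_iff.1 hz)
  have hnear : Ioo ((r - ε : ℝ) : EReal) ⊤ ∈ 𝓝 (f x) :=
    hx ▸ Ioo_mem_nhds (EReal.coe_lt_coe_iff.2 (sub_lt_self r hε)) (EReal.coe_lt_top r)
  refine limsup_le_of_le (by isBoundedDefault) ?_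
  filter_upwards [prod_mem_prod (Ioc_mem_nhdsGT one_pos)
    (inter_mem_inf (Metric.closedBall_mem_nhds x δ.2) (preimage_mem_comap hnear))]
    with ⟨t, x'⟩ ⟨⟨ht0, ht1⟩, hdist, hlo, htop⟩
  have hx' : f x' = (f x').toReal := (EReal.coe_toReal htop.ne hlo.ne_bot).symm
  have hclose : r - ε < (f x').toReal := EReal.coe_lt_coe_iff.1 (hx' ▸ hlo)
  have hd' : ‖(y - x') - (y - x)‖ ≤ δ := by
    rwa [sub_sub_sub_cancel_left, ← dist_eq_norm, dist_comm]
  refine (iInf_le _ ⟨y - x', hd'⟩).trans ?_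
  rw [hx']
  refine (slope_le_of_convex hconv hx' hy ht0 ht1).trans (EReal.coe_le_coe_iff.2 ?_)
  linarith

theorem clarkeSub_subset_cxSub_of_convex {f : X → EReal} (hbot : ∀ z, f z ≠ ⊥)
    (hconv : ∀ x y : X, ∀ a b : ℝ, 0 ≤ a → 0 ≤ b → a + b = 1 →
      f (a • x + b • y) ≤ (a : EReal) * f x + (b : EReal) * f y)
    {x : X} (hx : f x ≠ ⊤) :
    clarkeSub f x ⊆ cxSub f x := by
  intro xs hxs y
  rcases eq_or_ne (f y) ⊤ with hy | hy
  · exact hy ▸ le_top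
  have hx' := (EReal.coe_toReal hx (hbot x)).symm
  have hy' := (EReal.coe_toReal hy (hbot y)).symm
  have hle := EReal.coe_le_coe_iff.1 ((hxs (y - x)).trans (crSub_le_of_convex hconv hx' hy'))
  rw [hx', hy', ← EReal.coe_add, EReal.coe_le_coe_iff]
  linarith

theorem clarkeSub_eq_cxSub_of_convex_general
    (f : X → EReal)
    (hbot : ∀ z, f z ≠ ⊥)
    (hconv : ∀ x y : X, ∀ a b : ℝ, 0 ≤ a → 0 ≤ b → a + b = 1 →
      f (a • x + b • y) ≤ (a : EReal) * f x + (b : EReal) * f y)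
    (xb : X) (hxb : f xb ≠ ⊤) :
    clarkeSub f xb = cxSub f xb :=
  (clarkeSub_subset_cxSub_of_convex hbot hconv hxb).antisymm
    (cxSub_subset_clarkeSub hxb (hbot xb))

theorem clarkeSub_eq_cxSub_of_convex [CompleteSpace X]
    (f : X → EReal) (hlsc : LowerSemicontinuous f)
    (hbot : ∀ z, f z ≠ ⊥) (hproper : ∃ z, f z ≠ ⊤)
    (hconv : ∀ x y : X, ∀ a b : ℝ, 0 ≤ a → 0 ≤ b → a + b = 1 →
      f (a • x + b • y) ≤ (a : EReal) * f x + (b : EReal) * f y)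
    (xb : X) (hxb : f xb ≠ ⊤) :
    clarkeSub f xb = cxSub f xb :=
  clarkeSub_eq_cxSub_of_convex_general f hbot hconv xb hxb
end

section
/- Let X be a real Banach space and f : X → ℝ ∪ {+∞} proper lower semicontinuous convex. Then the monotone polar of the convex subdifferential ∂_cx f satisfies: for every x ∈ X, (∂_cx f)⁰(x) ⊇ {x* ∈ X* : (f − x*)(y + t(x − y)) ≤ (f − x*)(y) for all y ∈ X and t ∈ [0,1]}, where (f − x*)(z) := f(z) − ⟨x*, z⟩. -/
open Filter Topology Set

variable {X : Type*} [NormedAddCommGroup X] [NormedSpace ℝ X]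

/-! Only `t = 1` is needed: then `f - x*` does not increase from `y` to `x`, so every
`y* ∈ ∂f(y)` satisfies `⟨y*, x - y⟩ ≤ f x - f y ≤ ⟨x*, x - y⟩`. Properness makes `f y` finite
whenever `∂f(y)` is nonempty, which is what lets the two inequalities be subtracted. -/

section ConvexSubdifferential

variable {f : X → EReal} {x y : X} {xs ys : X →L[ℝ] ℝ}

theorem ne_top_of_mem_cxSub (hys : ys ∈ cxSub f y) (hproper : ∃ z, f z ≠ ⊤) : f y ≠ ⊤ := by
  obtain ⟨z, hz⟩ := hproper
  intro hfy
  have := hys z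
  rw [hfy, EReal.add_top_of_ne_bot (EReal.coe_ne_bot _), top_le_iff] at this
  exact hz this

theorem apply_sub_le_of_mem_cxSub (hys : ys ∈ cxSub f y) (hfy : f y ≠ ⊤) (hfy' : f y ≠ ⊥)
    (h : f x - xs x ≤ f y - xs y) : ys (x - y) ≤ xs (x - y) := by
  have hsubgrad := hys x
  rw [← EReal.coe_toReal hfy hfy'] at hsubgrad h
  set r := (f y).toReal
  have hfx : f x ≤ ((r - xs y + xs x : ℝ) : EReal) := by
    rw [← EReal.coe_sub, EReal.sub_le_iff_le_add (.inr (EReal.coe_ne_top _))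
      (.inr (EReal.coe_ne_bot _))] at h
    exact_mod_cast h
  have := hsubgrad.trans hfx
  rw [← EReal.coe_add, EReal.coe_le_coe_iff, map_sub] at this
  rw [map_sub, map_sub]
  linarith

end ConvexSubdifferential

theorem increasing_subset_polar_cxSub_general
    (f : X → EReal)
    (hbot : ∀ z, f z ≠ ⊥) (hproper : ∃ z, f z ≠ ⊤)
    (x : X) :
    {xs : X →L[ℝ] ℝ | ∀ y : X, ∀ t ∈ Set.Icc (0:ℝ) 1,
        f (y + t • (x - y)) - ((xs (y + t • (x - y)) : ℝ) : EReal) ≤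
          f y - ((xs y : ℝ) : EReal)} ⊆
      {xs : X →L[ℝ] ℝ | (x, xs) ∈ MonoPolar {p | p.2 ∈ cxSub f p.1}} := by
  rintro xs hxs ⟨y, ys⟩ (hys : ys ∈ cxSub f y)
  have hdescent : f x - xs x ≤ f y - xs y := by
    simpa using hxs y 1 ⟨zero_le_one, le_rfl⟩
  have hslope := apply_sub_le_of_mem_cxSub hys (ne_top_of_mem_cxSub hys hproper) (hbot y) hdescent
  change 0 ≤ (ys - xs) (y - x)
  rw [← neg_sub x y, map_neg, sub_apply]
  linarith

theorem increasing_subset_polar_cxSub [CompleteSpace X]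
    (f : X → EReal) (hlsc : LowerSemicontinuous f)
    (hbot : ∀ z, f z ≠ ⊥) (hproper : ∃ z, f z ≠ ⊤)
    (hconv : ∀ x y : X, ∀ a b : ℝ, 0 ≤ a → 0 ≤ b → a + b = 1 →
      f (a • x + b • y) ≤ (a : EReal) * f x + (b : EReal) * f y)
    (x : X) :
    {xs : X →L[ℝ] ℝ | ∀ y : X, ∀ t ∈ Set.Icc (0:ℝ) 1,
        f (y + t • (x - y)) - ((xs (y + t • (x - y)) : ℝ) : EReal) ≤
          f y - ((xs y : ℝ) : EReal)} ⊆
      {xs : X →L[ℝ] ℝ | (x, xs) ∈ MonoPolar {p | p.2 ∈ cxSub f p.1}} :=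
  increasing_subset_polar_cxSub_general f hbot hproper x
end

section
/- Let X be a real Banach space, f : X → ℝ ∪ {+∞} proper lower semicontinuous, U ⊆ X open convex, x̄ ∈ U. Suppose for every ε > 0 and every y ∈ U with y ∈ dom f, there exists (y_ε, y*_ε) with y*_ε ∈ ∂_C f(y_ε), ‖y_ε − y‖ ≤ ε, |f(y_ε) − f(y)| ≤ ε, ⟨y*_ε, y_ε − y⟩ ≤ ε, and f′(y; d) ≤ inf_{ε>0} sup ⟨∂̆_ε f(y), d⟩ for all d (the Subderivative/Subdifferential Inequality). If sup ⟨∂_C f(y), x̄ − y⟩ ≤ 0 for every y ∈ U, then f′(y; x̄ − y) ≤ 0 for every y ∈ U ∩ dom f. -/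
open Filter Topology Set

variable {X : Type*} [NormedAddCommGroup X] [NormedSpace ℝ X]

/-!
Near `y` every element of the `ε`-enlargement is a Clarke subgradient `ys ∈ ∂_C f(yε)` at a point
`yε` of `U`, so `⟪ys, xb - y⟫ = ⟪ys, xb - yε⟫ + ⟪ys, yε - y⟫ ≤ 0 + ε` by the Clarke–Minty hypothesis.
The subderivative/subdifferential inequality then bounds `f′(y; xb - y)` by every small `ε > 0`.
-/

open Metric

theorem apply_sub_le_of_mem_epsEnl {f : X → EReal} {ε : ℝ} {y xb : X} {xs : X →L[ℝ] ℝ}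
    (hxs : xs ∈ epsEnl f ε y)
    (hminty : ∀ z ∈ closedBall y ε, ∀ zs ∈ clarkeSub f z, zs (xb - z) ≤ 0) :
    xs (xb - y) ≤ ε := by
  obtain ⟨ye, hye, hdist, -, -, hpair⟩ := hxs
  have hminty_ye : xs (xb - ye) ≤ 0 := hminty ye (mem_closedBall_iff_norm.mpr hdist) xs hye
  calc xs (xb - y) = xs (xb - ye) + xs (ye - y) := by rw [← map_add, sub_add_sub_cancel]
    _ ≤ ε := by linarith

theorem sSup_apply_epsEnl_le {f : X → EReal} {ε : ℝ} {y xb : X}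
    (hminty : ∀ z ∈ closedBall y ε, ∀ zs ∈ clarkeSub f z, zs (xb - z) ≤ 0) :
    sSup ((fun xs : X →L[ℝ] ℝ => ((xs (xb - y) : ℝ) : EReal)) '' epsEnl f ε y) ≤ ε :=
  sSup_le <| forall_mem_image.mpr fun _ hxs =>
    EReal.coe_le_coe_iff.mpr (apply_sub_le_of_mem_epsEnl hxs hminty)

theorem clarke_minty_imp_dini_minty_general
    (f : X → EReal)
    (U : Set X) (hUo : IsOpen U) (xb : X)
    (hSSI : ∀ y ∈ U, f y ≠ ⊤ → ∀ d : X,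
      diniSub f y d ≤ ⨅ ε : {ε : ℝ // 0 < ε},
        sSup ((fun xs : X →L[ℝ] ℝ => ((xs d : ℝ) : EReal)) '' epsEnl f ε.1 y))
    (h : ∀ y ∈ U, ∀ xs ∈ clarkeSub f y, xs (xb - y) ≤ 0) :
    ∀ y ∈ U, f y ≠ ⊤ → diniSub f y (xb - y) ≤ 0 := by
  intro y hy hfy
  obtain ⟨r, hr, hball⟩ := isOpen_iff.mp hUo y hy
  have hsmall : ∀ ε ∈ Set.Ioo 0 r, diniSub f y (xb - y) ≤ ε := fun ε ⟨hε, hεr⟩ =>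
    (hSSI y hy hfy (xb - y)).trans <| (iInf_le _ ⟨ε, hε⟩).trans <|
      sSup_apply_epsEnl_le fun z hz => h z (hball (closedBall_subset_ball hεr hz))
  have hcoe : Tendsto (fun ε : ℝ => (ε : EReal)) (𝓝[>] 0) (𝓝 0) :=
    (continuous_coe_real_ereal.tendsto' 0 0 rfl).mono_left nhdsWithin_le_nhds
  exact ge_of_tendsto hcoe (eventually_of_mem (Ioo_mem_nhdsGT hr) hsmall)

theorem clarke_minty_imp_dini_minty [CompleteSpace X]
    (f : X → EReal) (hlsc : LowerSemicontinuous f)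
    (hbot : ∀ z, f z ≠ ⊥) (hproper : ∃ z, f z ≠ ⊤)
    (U : Set X) (hUo : IsOpen U) (hUc : Convex ℝ U) (xb : X) (hxb : xb ∈ U)
    (hEnl : ∀ y ∈ U, f y ≠ ⊤ → ∀ ε : ℝ, 0 < ε →
      ∃ ye : X, ∃ yse : X →L[ℝ] ℝ, yse ∈ clarkeSub f ye ∧ ‖ye - y‖ ≤ ε ∧
        f ye - f y ≤ (ε : EReal) ∧ f y - f ye ≤ (ε : EReal) ∧ yse (ye - y) ≤ ε)
    (hSSI : ∀ y ∈ U, f y ≠ ⊤ → ∀ d : X,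
      diniSub f y d ≤ ⨅ ε : {ε : ℝ // 0 < ε},
        sSup ((fun xs : X →L[ℝ] ℝ => ((xs d : ℝ) : EReal)) '' epsEnl f ε.1 y))
    (h : ∀ y ∈ U, ∀ xs ∈ clarkeSub f y, xs (xb - y) ≤ 0) :
    ∀ y ∈ U, f y ≠ ⊤ → diniSub f y (xb - y) ≤ 0 :=
  clarke_minty_imp_dini_minty_general f U hUo xb hSSI h
end
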